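/- arXiv:math/0110231 — 2 statements merged into one kernel-verified Lean document; each statement's English description precedes it below -/
import Mathlib

section
/- The vector ρ₃ := 2e_L + e_{14} + e_{15} + e_{24} + e_{25} + e_{34} + e_{35} lies in Γ^∨, spans an extremal ray of Γ^∨, and satisfies ⟨K, ρ₃⟩ = −2; hence ρ₃ is a coextremal ray of M̄_{0,6}. (Geometrically, ρ₃ is the class of a fiber of the conic bundle M̄_{0,6} → ℙ² given by the 2-dimensional linear series of cubics in ℙ³ through the five points p₁,…,p₅ and the six lines ℓ₁₄, ℓ₁₅, ℓ₂₄, ℓ₂₅, ℓ₃₄, ℓ₃₅.) -/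
noncomputable section

/-- Index in `Fin 16` of the exceptional class `E_{ab}` attached to a pair of points
(points written `0`-based as elements of `Fin 5`, assuming `a < b`):
`(0,1) ↦ 6, (0,2) ↦ 7, …, (3,4) ↦ 15`. -/
def pairIdx : ℕ → ℕ → Fin 16
  | 0, 1 => 6
  | 0, 2 => 7
  | 0, 3 => 8
  | 0, 4 => 9
  | 1, 2 => 10
  | 1, 3 => 11
  | 1, 4 => 12
  | 2, 3 => 13
  | 2, 4 => 14
  | 3, 4 => 15
  | _, _ => 0

/-- The coordinate vector `e_L` (the class `L`). -/
def eL : Fin 16 → ℝ := Pi.single 0 1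

/-- The coordinate vector `e_i` for the point `i ∈ {1,…,5}` (represented `0`-based
by `i : Fin 5`). -/
def eP (i : Fin 5) : Fin 16 → ℝ := Pi.single ⟨i.val + 1, by omega⟩ 1

/-- The coordinate vector `e_{ab}` for a 2-element subset `{a,b} ⊂ {1,…,5}`
(represented `0`-based); symmetric in `a` and `b`. -/
def eE (a b : Fin 5) : Fin 16 → ℝ :=
  Pi.single (if a.val < b.val then pairIdx a.val b.val else pairIdx b.val a.val) 1

/-- The standard inner product on `ℝ¹⁶`. -/
def ip (x y : Fin 16 → ℝ) : ℝ := ∑ i, x i * y i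

def Distinct3 (k l m : Fin 5) : Prop := k ≠ l ∧ k ≠ m ∧ l ≠ m

def Distinct5 (i j k l m : Fin 5) : Prop :=
  i ≠ j ∧ i ≠ k ∧ i ≠ l ∧ i ≠ m ∧ j ≠ k ∧ j ≠ l ∧ j ≠ m ∧ k ≠ l ∧ k ≠ m ∧ l ≠ m

/-- The 40 classes: 25 boundary divisors and 15 fixed-point divisors `F_σ` of `M̄₀₆`. -/
def Gamma : Set (Fin 16 → ℝ) :=
  {v | (∃ i : Fin 5, v = eP i) ∨
       (∃ a b : Fin 5, a ≠ b ∧ v = eE a b) ∨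
       (∃ k l m : Fin 5, Distinct3 k l m ∧
          v = eL - eP k - eP l - eP m - eE k l - eE k m - eE l m) ∨
       (∃ j a b c d : Fin 5, Distinct5 j a b c d ∧
          v = (2 : ℝ) • eL - (∑ i, eP i) - eE a c - eE a d - eE b c - eE b d)}

/-- The dual cone `Γ^∨ = {v : ⟨g,v⟩ ≥ 0 for all g ∈ Γ}`. -/
def GammaDual : Set (Fin 16 → ℝ) := {v | ∀ gv ∈ Gamma, 0 ≤ ip gv v}
/-- The canonical class `K = -4e_L + 2(e_1 + ⋯ + e_5) + Σ_{{a,b}} e_{ab}` of `M̄₀₆`. -/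
def Kcl : Fin 16 → ℝ :=
  -((4 : ℝ) • eL) + (2 : ℝ) • (∑ i, eP i) +
    ∑ a : Fin 5, ∑ b : Fin 5, if a < b then eE a b else 0

/-- A nonzero `ρ` spans an extremal ray of the convex cone `C` if `ρ ∈ C` and
whenever `v₁, v₂ ∈ C` with `v₁ + v₂ ∈ ℝ₊·ρ`, both `v₁` and `v₂` lie in `ℝ₊·ρ`. -/
def SpansExtremalRay (C : Set (Fin 16 → ℝ)) (ρ : Fin 16 → ℝ) : Prop :=
  ρ ≠ 0 ∧ ρ ∈ C ∧ ∀ v₁ v₂, v₁ ∈ C → v₂ ∈ C →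
    (∃ t : ℝ, 0 ≤ t ∧ v₁ + v₂ = t • ρ) →
    ((∃ t : ℝ, 0 ≤ t ∧ v₁ = t • ρ) ∧ (∃ t : ℝ, 0 ≤ t ∧ v₂ = t • ρ))
/-- `ρ₃ = 2e_L + e₁₄ + e₁₅ + e₂₄ + e₂₅ + e₃₄ + e₃₅` (pairs written `1`-based;
here `0`-based in `Fin 5`). -/
def ρ₃ : Fin 16 → ℝ :=
  (2 : ℝ) • eL + eE 0 3 + eE 0 4 + eE 1 3 + eE 1 4 + eE 2 3 + eE 2 4


-- ## Auxiliary lemmas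

lemma ip_add_right (x y v : Fin 16 → ℝ) : ip v (x + y) = ip v x + ip v y := by
  simp [ip, mul_add, Finset.sum_add_distrib]
lemma ip_smul_right (c : ℝ) (x v : Fin 16 → ℝ) : ip v (c • x) = c * ip v x := by
  simp only [ip, Finset.mul_sum, Pi.smul_apply, smul_eq_mul]
  exact Finset.sum_congr rfl fun i _ => by ring
lemma ip_single' (j : Fin 16) (v : Fin 16 → ℝ) : ip v (Pi.single j (1:ℝ)) = v j := by
  simp [ip, Pi.single_apply]
lemma ip_add_left (x y v : Fin 16 → ℝ) : ip (x + y) v = ip x v + ip y v := by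
  simp [ip, add_mul, Finset.sum_add_distrib]
lemma ip_sub_left (x y v : Fin 16 → ℝ) : ip (x - y) v = ip x v - ip y v := by
  simp [ip, sub_mul, Finset.sum_sub_distrib]
lemma ip_smul_left (c : ℝ) (x v : Fin 16 → ℝ) : ip (c • x) v = c * ip x v := by
  simp only [ip, Finset.mul_sum, Pi.smul_apply, smul_eq_mul]
  exact Finset.sum_congr rfl fun i _ => by ring
lemma ip_single (j : Fin 16) (v : Fin 16 → ℝ) : ip (Pi.single j (1:ℝ)) v = v j := by
  simp [ip, Pi.single_apply]

lemma rho_single : ρ₃ = (2:ℝ) • (Pi.single 0 1 : Fin 16 → ℝ) + Pi.single 8 1 + Pi.single 9 1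
    + Pi.single 11 1 + Pi.single 12 1 + Pi.single 13 1 + Pi.single 14 1 := rfl

lemma ip_eval (g : Fin 16 → ℝ) : ip g ρ₃ = 2 * g 0 + g 8 + g 9 + g 11 + g 12 + g 13 + g 14 := by
  rw [rho_single]
  simp [ip_add_right, ip_smul_right, ip_single']

lemma ipP (i : Fin 5) : ip (eP i) ρ₃ = 0 := by
  fin_cases i <;>
    simp (config := { decide := true }) [ip_eval, eP, Pi.single_apply]

lemma ipL : ip eL ρ₃ = 2 := by
  simp (config := { decide := true }) [ip_eval, eL, Pi.single_apply]

lemma ipSum : ip (∑ i, eP i) ρ₃ = 0 := by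
  rw [show (∑ i, eP i) = eP 0 + eP 1 + eP 2 + eP 3 + eP 4 from by
    simp [Fin.sum_univ_five]]
  simp [ip_add_left, ipP]

/-- the value of `⟨E_{ab}, ρ₃⟩` is the bipartite indicator. -/
lemma ipE_eq (a b : Fin 5) (hab : a ≠ b) :
    ip (eE a b) ρ₃ = (if (decide (a.val ≤ 2) ≠ decide (b.val ≤ 2)) then 1 else 0) := by
  fin_cases a <;> fin_cases b <;>
    first
      | exact absurd rfl hab
      | simp (config := { decide := true }) [ip_eval, eE, pairIdx, Pi.single_apply]

lemma ipE_nonneg (a b : Fin 5) : 0 ≤ ip (eE a b) ρ₃ := by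
  fin_cases a <;> fin_cases b <;>
    simp (config := { decide := true }) [ip_eval, eE, pairIdx, Pi.single_apply]

lemma ipE_le_one (a b : Fin 5) (hab : a ≠ b) : ip (eE a b) ρ₃ ≤ 1 := by
  rw [ipE_eq a b hab]; split <;> norm_num

lemma ipTriple (k l m : Fin 5) (h : Distinct3 k l m) :
    0 ≤ ip (eL - eP k - eP l - eP m - eE k l - eE k m - eE l m) ρ₃ := by
  obtain ⟨h1, h2, h3⟩ := h
  rw [ip_sub_left, ip_sub_left, ip_sub_left, ip_sub_left, ip_sub_left, ip_sub_left,
    ipL, ipP, ipP, ipP, ipE_eq k l h1, ipE_eq k m h2, ipE_eq l m h3]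
  rcases hk : decide (k.val ≤ 2) <;> rcases hl : decide (l.val ≤ 2) <;>
    rcases hm : decide (m.val ≤ 2) <;> norm_num

lemma ipQuad (a b c d : Fin 5) (hac : a ≠ c) (had : a ≠ d) (hbc : b ≠ c) (hbd : b ≠ d) :
    0 ≤ ip ((2 : ℝ) • eL - (∑ i, eP i) - eE a c - eE a d - eE b c - eE b d) ρ₃ := by
  rw [ip_sub_left, ip_sub_left, ip_sub_left, ip_sub_left, ip_sub_left, ip_smul_left,
    ipL, ipSum]
  have h1 := ipE_le_one a c hac
  have h2 := ipE_le_one a d had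
  have h3 := ipE_le_one b c hbc
  have h4 := ipE_le_one b d hbd
  linarith

lemma rho_mem : ρ₃ ∈ GammaDual := by
  rintro g (⟨i, rfl⟩ | ⟨a, b, hab, rfl⟩ | ⟨k, l, m, h, rfl⟩ | ⟨j, a, b, c, d, hd, rfl⟩)
  · exact (ipP i).ge
  · rcases ipE_eq a b hab with h
    rw [h]; split <;> norm_num
  · exact ipTriple k l m h
  · exact ipQuad a b c d hd.2.2.2.2.2.1 hd.2.2.2.2.2.2.1 hd.2.2.2.2.2.2.2.1 hd.2.2.2.2.2.2.2.2.1

set_option maxHeartbeats 1000000 in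
/-- Any vector orthogonal to the 15 chosen elements of `Γ` is a multiple of `ρ₃`. -/
lemma key (v : Fin 16 → ℝ)
    (hP : ∀ i : Fin 5, ip (eP i) v = 0)
    (hE1 : ip (eE 0 1) v = 0) (hE2 : ip (eE 0 2) v = 0)
    (hE3 : ip (eE 1 2) v = 0) (hE4 : ip (eE 3 4) v = 0)
    (hT1 : ip (eL - eP 0 - eP 1 - eP 3 - eE 0 1 - eE 0 3 - eE 1 3) v = 0)
    (hT2 : ip (eL - eP 0 - eP 2 - eP 3 - eE 0 2 - eE 0 3 - eE 2 3) v = 0)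
    (hT3 : ip (eL - eP 1 - eP 2 - eP 3 - eE 1 2 - eE 1 3 - eE 2 3) v = 0)
    (hT4 : ip (eL - eP 0 - eP 3 - eP 4 - eE 0 3 - eE 0 4 - eE 3 4) v = 0)
    (hT5 : ip (eL - eP 0 - eP 1 - eP 4 - eE 0 1 - eE 0 4 - eE 1 4) v = 0)
    (hT6 : ip (eL - eP 0 - eP 2 - eP 4 - eE 0 2 - eE 0 4 - eE 2 4) v = 0) :
    v = (v 0 / 2) • ρ₃ := by
  have p1 : v 1 = 0 := by
    have := hP 0; rwa [show eP 0 = Pi.single 1 (1:ℝ) from rfl, ip_single] at this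
  have p2 : v 2 = 0 := by
    have := hP 1; rwa [show eP 1 = Pi.single 2 (1:ℝ) from rfl, ip_single] at this
  have p3 : v 3 = 0 := by
    have := hP 2; rwa [show eP 2 = Pi.single 3 (1:ℝ) from rfl, ip_single] at this
  have p4 : v 4 = 0 := by
    have := hP 3; rwa [show eP 3 = Pi.single 4 (1:ℝ) from rfl, ip_single] at this
  have p5 : v 5 = 0 := by
    have := hP 4; rwa [show eP 4 = Pi.single 5 (1:ℝ) from rfl, ip_single] at this
  have e1 : v 6 = 0 := by
    rwa [show eE 0 1 = Pi.single 6 (1:ℝ) from rfl, ip_single] at hE1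
  have e2 : v 7 = 0 := by
    rwa [show eE 0 2 = Pi.single 7 (1:ℝ) from rfl, ip_single] at hE2
  have e3 : v 10 = 0 := by
    rwa [show eE 1 2 = Pi.single 10 (1:ℝ) from rfl, ip_single] at hE3
  have e4 : v 15 = 0 := by
    rwa [show eE 3 4 = Pi.single 15 (1:ℝ) from rfl, ip_single] at hE4
  have t1 : v 0 - v 1 - v 2 - v 4 - v 6 - v 8 - v 11 = 0 := by
    rw [ip_sub_left, ip_sub_left, ip_sub_left, ip_sub_left, ip_sub_left, ip_sub_left] at hT1
    rwa [show eL = Pi.single 0 (1:ℝ) from rfl, show eP 0 = Pi.single 1 (1:ℝ) from rfl,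
      show eP 1 = Pi.single 2 (1:ℝ) from rfl, show eP 3 = Pi.single 4 (1:ℝ) from rfl,
      show eE 0 1 = Pi.single 6 (1:ℝ) from rfl, show eE 0 3 = Pi.single 8 (1:ℝ) from rfl,
      show eE 1 3 = Pi.single 11 (1:ℝ) from rfl,
      ip_single, ip_single, ip_single, ip_single, ip_single, ip_single, ip_single] at hT1
  have t2 : v 0 - v 1 - v 3 - v 4 - v 7 - v 8 - v 13 = 0 := by
    rw [ip_sub_left, ip_sub_left, ip_sub_left, ip_sub_left, ip_sub_left, ip_sub_left] at hT2
    rwa [show eL = Pi.single 0 (1:ℝ) from rfl, show eP 0 = Pi.single 1 (1:ℝ) from rfl,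
      show eP 2 = Pi.single 3 (1:ℝ) from rfl, show eP 3 = Pi.single 4 (1:ℝ) from rfl,
      show eE 0 2 = Pi.single 7 (1:ℝ) from rfl, show eE 0 3 = Pi.single 8 (1:ℝ) from rfl,
      show eE 2 3 = Pi.single 13 (1:ℝ) from rfl,
      ip_single, ip_single, ip_single, ip_single, ip_single, ip_single, ip_single] at hT2
  have t3 : v 0 - v 2 - v 3 - v 4 - v 10 - v 11 - v 13 = 0 := by
    rw [ip_sub_left, ip_sub_left, ip_sub_left, ip_sub_left, ip_sub_left, ip_sub_left] at hT3
    rwa [show eL = Pi.single 0 (1:ℝ) from rfl, show eP 1 = Pi.single 2 (1:ℝ) from rfl,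
      show eP 2 = Pi.single 3 (1:ℝ) from rfl, show eP 3 = Pi.single 4 (1:ℝ) from rfl,
      show eE 1 2 = Pi.single 10 (1:ℝ) from rfl, show eE 1 3 = Pi.single 11 (1:ℝ) from rfl,
      show eE 2 3 = Pi.single 13 (1:ℝ) from rfl,
      ip_single, ip_single, ip_single, ip_single, ip_single, ip_single, ip_single] at hT3
  have t4 : v 0 - v 1 - v 4 - v 5 - v 8 - v 9 - v 15 = 0 := by
    rw [ip_sub_left, ip_sub_left, ip_sub_left, ip_sub_left, ip_sub_left, ip_sub_left] at hT4
    rwa [show eL = Pi.single 0 (1:ℝ) from rfl, show eP 0 = Pi.single 1 (1:ℝ) from rfl,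
      show eP 3 = Pi.single 4 (1:ℝ) from rfl, show eP 4 = Pi.single 5 (1:ℝ) from rfl,
      show eE 0 3 = Pi.single 8 (1:ℝ) from rfl, show eE 0 4 = Pi.single 9 (1:ℝ) from rfl,
      show eE 3 4 = Pi.single 15 (1:ℝ) from rfl,
      ip_single, ip_single, ip_single, ip_single, ip_single, ip_single, ip_single] at hT4
  have t5 : v 0 - v 1 - v 2 - v 5 - v 6 - v 9 - v 12 = 0 := by
    rw [ip_sub_left, ip_sub_left, ip_sub_left, ip_sub_left, ip_sub_left, ip_sub_left] at hT5
    rwa [show eL = Pi.single 0 (1:ℝ) from rfl, show eP 0 = Pi.single 1 (1:ℝ) from rfl,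
      show eP 1 = Pi.single 2 (1:ℝ) from rfl, show eP 4 = Pi.single 5 (1:ℝ) from rfl,
      show eE 0 1 = Pi.single 6 (1:ℝ) from rfl, show eE 0 4 = Pi.single 9 (1:ℝ) from rfl,
      show eE 1 4 = Pi.single 12 (1:ℝ) from rfl,
      ip_single, ip_single, ip_single, ip_single, ip_single, ip_single, ip_single] at hT5
  have t6 : v 0 - v 1 - v 3 - v 5 - v 7 - v 9 - v 14 = 0 := by
    rw [ip_sub_left, ip_sub_left, ip_sub_left, ip_sub_left, ip_sub_left, ip_sub_left] at hT6
    rwa [show eL = Pi.single 0 (1:ℝ) from rfl, show eP 0 = Pi.single 1 (1:ℝ) from rfl,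
      show eP 2 = Pi.single 3 (1:ℝ) from rfl, show eP 4 = Pi.single 5 (1:ℝ) from rfl,
      show eE 0 2 = Pi.single 7 (1:ℝ) from rfl, show eE 0 4 = Pi.single 9 (1:ℝ) from rfl,
      show eE 2 4 = Pi.single 14 (1:ℝ) from rfl,
      ip_single, ip_single, ip_single, ip_single, ip_single, ip_single, ip_single] at hT6
  funext j
  fin_cases j <;>
    simp (config := { decide := true }) [rho_single, Pi.single_apply] <;>
    linarith

lemma zE1 : ip (eE 0 1) ρ₃ = 0 := by
  rw [show eE 0 1 = Pi.single 6 (1:ℝ) from rfl, ip_single]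
  simp (config := { decide := true }) [rho_single, Pi.single_apply]
lemma zE2 : ip (eE 0 2) ρ₃ = 0 := by
  rw [show eE 0 2 = Pi.single 7 (1:ℝ) from rfl, ip_single]
  simp (config := { decide := true }) [rho_single, Pi.single_apply]
lemma zE3 : ip (eE 1 2) ρ₃ = 0 := by
  rw [show eE 1 2 = Pi.single 10 (1:ℝ) from rfl, ip_single]
  simp (config := { decide := true }) [rho_single, Pi.single_apply]
lemma zE4 : ip (eE 3 4) ρ₃ = 0 := by
  rw [show eE 3 4 = Pi.single 15 (1:ℝ) from rfl, ip_single]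
  simp (config := { decide := true }) [rho_single, Pi.single_apply]

lemma zT1 : ip (eL - eP 0 - eP 1 - eP 3 - eE 0 1 - eE 0 3 - eE 1 3) ρ₃ = 0 := by
  simp (config := { decide := true }) [ip_eval, eL, eP, eE, pairIdx, Pi.single_apply]
  norm_num
lemma zT2 : ip (eL - eP 0 - eP 2 - eP 3 - eE 0 2 - eE 0 3 - eE 2 3) ρ₃ = 0 := by
  simp (config := { decide := true }) [ip_eval, eL, eP, eE, pairIdx, Pi.single_apply]
  norm_num
lemma zT3 : ip (eL - eP 1 - eP 2 - eP 3 - eE 1 2 - eE 1 3 - eE 2 3) ρ₃ = 0 := by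
  simp (config := { decide := true }) [ip_eval, eL, eP, eE, pairIdx, Pi.single_apply]
  norm_num
lemma zT4 : ip (eL - eP 0 - eP 3 - eP 4 - eE 0 3 - eE 0 4 - eE 3 4) ρ₃ = 0 := by
  simp (config := { decide := true }) [ip_eval, eL, eP, eE, pairIdx, Pi.single_apply]
  norm_num
lemma zT5 : ip (eL - eP 0 - eP 1 - eP 4 - eE 0 1 - eE 0 4 - eE 1 4) ρ₃ = 0 := by
  simp (config := { decide := true }) [ip_eval, eL, eP, eE, pairIdx, Pi.single_apply]
  norm_num
lemma zT6 : ip (eL - eP 0 - eP 2 - eP 4 - eE 0 2 - eE 0 4 - eE 2 4) ρ₃ = 0 := by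
  simp (config := { decide := true }) [ip_eval, eL, eP, eE, pairIdx, Pi.single_apply]
  norm_num

lemma Kval : ip Kcl ρ₃ = -2 := by
  have h : ∀ (j : Fin 16) (c : ℝ), Kcl j = c ↔ Kcl j = c := fun _ _ => Iff.rfl
  rw [ip_eval,
    show Kcl 0 = -4 from by
      simp (config := { decide := true }) [Kcl, eL, eP, eE, pairIdx, Fin.sum_univ_five,
        Finset.sum_apply, Pi.single_apply, apply_ite (fun f : Fin 16 → ℝ => f 0)],
    show Kcl 8 = 1 from by
      simp (config := { decide := true }) [Kcl, eL, eP, eE, pairIdx, Fin.sum_univ_five,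
        Finset.sum_apply, Pi.single_apply, apply_ite (fun f : Fin 16 → ℝ => f 8)],
    show Kcl 9 = 1 from by
      simp (config := { decide := true }) [Kcl, eL, eP, eE, pairIdx, Fin.sum_univ_five,
        Finset.sum_apply, Pi.single_apply, apply_ite (fun f : Fin 16 → ℝ => f 9)],
    show Kcl 11 = 1 from by
      simp (config := { decide := true }) [Kcl, eL, eP, eE, pairIdx, Fin.sum_univ_five,
        Finset.sum_apply, Pi.single_apply, apply_ite (fun f : Fin 16 → ℝ => f 11)],
    show Kcl 12 = 1 from by
      simp (config := { decide := true }) [Kcl, eL, eP, eE, pairIdx, Fin.sum_univ_five,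
        Finset.sum_apply, Pi.single_apply, apply_ite (fun f : Fin 16 → ℝ => f 12)],
    show Kcl 13 = 1 from by
      simp (config := { decide := true }) [Kcl, eL, eP, eE, pairIdx, Fin.sum_univ_five,
        Finset.sum_apply, Pi.single_apply, apply_ite (fun f : Fin 16 → ℝ => f 13)],
    show Kcl 14 = 1 from by
      simp (config := { decide := true }) [Kcl, eL, eP, eE, pairIdx, Fin.sum_univ_five,
        Finset.sum_apply, Pi.single_apply, apply_ite (fun f : Fin 16 → ℝ => f 14)]]
  norm_num

theorem rho3_coextremal :
    ρ₃ ∈ GammaDual ∧ SpansExtremalRay GammaDual ρ₃ ∧ ip Kcl ρ₃ = -2 := by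
  refine ⟨rho_mem, ⟨?_, rho_mem, ?_⟩, Kval⟩
  · intro h
    have h2 := congrFun h 0
    rw [show ρ₃ 0 = 2 from by
      simp (config := { decide := true }) [rho_single, Pi.single_apply]] at h2
    norm_num at h2
  · rintro v₁ v₂ h1 h2 ⟨t, ht, hsum⟩
    have hzero : ∀ g ∈ Gamma, ip g ρ₃ = 0 → ip g v₁ = 0 ∧ ip g v₂ = 0 := by
      intro g hg hgρ
      have e : ip g v₁ + ip g v₂ = 0 := by
        rw [← ip_add_right, hsum, ip_smul_right, hgρ, mul_zero]
      have n1 := h1 g hg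
      have n2 := h2 g hg
      constructor <;> linarith
    have mP : ∀ i : Fin 5, eP i ∈ Gamma := fun i => Or.inl ⟨i, rfl⟩
    have mE : ∀ a b : Fin 5, a ≠ b → eE a b ∈ Gamma :=
      fun a b h => Or.inr (Or.inl ⟨a, b, h, rfl⟩)
    have mT : ∀ k l m : Fin 5, Distinct3 k l m →
        (eL - eP k - eP l - eP m - eE k l - eE k m - eE l m) ∈ Gamma :=
      fun k l m h => Or.inr (Or.inr (Or.inl ⟨k, l, m, h, rfl⟩))
    have key' : ∀ v, (∀ g ∈ Gamma, ip g ρ₃ = 0 → ip g v = 0) → v = (v 0 / 2) • ρ₃ := by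
      intro v hv
      exact key v
        (fun i => hv _ (mP i) (ipP i))
        (hv _ (mE 0 1 (by decide)) zE1)
        (hv _ (mE 0 2 (by decide)) zE2)
        (hv _ (mE 1 2 (by decide)) zE3)
        (hv _ (mE 3 4 (by decide)) zE4)
        (hv _ (mT 0 1 3 ⟨by decide, by decide, by decide⟩) zT1)
        (hv _ (mT 0 2 3 ⟨by decide, by decide, by decide⟩) zT2)
        (hv _ (mT 1 2 3 ⟨by decide, by decide, by decide⟩) zT3)
        (hv _ (mT 0 3 4 ⟨by decide, by decide, by decide⟩) zT4)
        (hv _ (mT 0 1 4 ⟨by decide, by decide, by decide⟩) zT5)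
        (hv _ (mT 0 2 4 ⟨by decide, by decide, by decide⟩) zT6)
    have hv₁ : v₁ = (v₁ 0 / 2) • ρ₃ := key' v₁ (fun g hg hgρ => (hzero g hg hgρ).1)
    have hv₂ : v₂ = (v₂ 0 / 2) • ρ₃ := key' v₂ (fun g hg hgρ => (hzero g hg hgρ).2)
    have nonneg : ∀ v : Fin 16 → ℝ, v ∈ GammaDual → v = (v 0 / 2) • ρ₃ → 0 ≤ v 0 / 2 := by
      intro v hv hveq
      have h8 : 0 ≤ v 8 := by
        have := hv (eE 0 3) (mE 0 3 (by decide))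
        rwa [show eE 0 3 = Pi.single 8 (1:ℝ) from rfl, ip_single] at this
      have e8 := congrFun hveq 8
      rw [Pi.smul_apply, show ρ₃ 8 = 1 from by
        simp (config := { decide := true }) [rho_single, Pi.single_apply]] at e8
      simp only [smul_eq_mul, mul_one] at e8
      linarith
    exact ⟨⟨v₁ 0 / 2, nonneg v₁ h1 hv₁, hv₁⟩, ⟨v₂ 0 / 2, nonneg v₂ h2 hv₂, hv₂⟩⟩
end
end

section
/- The vector ρ₁₀ := e_L lies in Γ^∨, spans an extremal ray of Γ^∨, and satisfies ⟨K, ρ₁₀⟩ = −4; hence ρ₁₀ (the class of a line in ℙ³ pulled back to M̄_{0,6}) is a coextremal ray of M̄_{0,6}. -/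
noncomputable section

/-- `ρ₁₀ = e_L`. -/
def ρ₁₀ : Fin 16 → ℝ := eL

/-! Every class in `Γ` has nonnegative `L`-coordinate, so `e_L ∈ Γ^∨`. Conversely `Γ` contains
the fifteen coordinate vectors `e_i`, `e_{ab}` and the plane class
`e_L - e_1 - e_2 - e_3 - e_{12} - e_{13} - e_{23}`, whose pairing bounds the `L`-coordinate below by
six others, so `Γ^∨` lies in the nonnegative orthant. A coordinate ray of the orthant that lies in
a subcone is extremal in it. Finally `⟨K, e_L⟩` is the `L`-coordinate `-4` of `K`. -/

lemma ip_eq_dotProduct (x y : Fin 16 → ℝ) : ip x y = x ⬝ᵥ y := rfl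

lemma ip_single_left (j : Fin 16) (v : Fin 16 → ℝ) : ip (Pi.single j 1) v = v j :=
  (single_dotProduct v 1 j).trans (one_mul _)

lemma ip_single_right (g : Fin 16 → ℝ) (j : Fin 16) : ip g (Pi.single j 1) = g j :=
  (dotProduct_single g 1 j).trans (mul_one _)

lemma pairIdx_ne_zero : ∀ a b : Fin 5, a ≠ b →
    (if a.val < b.val then pairIdx a.val b.val else pairIdx b.val a.val) ≠ (0 : Fin 16) := by
  decide

lemma eP_apply_zero (i : Fin 5) : eP i 0 = 0 :=
  Pi.single_eq_of_ne (Fin.ne_of_val_ne (Nat.succ_ne_zero i.val).symm) 1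

lemma eE_apply_zero {a b : Fin 5} (hab : a ≠ b) : eE a b 0 = 0 :=
  Pi.single_eq_of_ne (pairIdx_ne_zero a b hab).symm 1

lemma eE_eq_single {a b : Fin 5} (hab : a.val < b.val) :
    eE a b = Pi.single (pairIdx a.val b.val) 1 := by
  simp [eE, hab]

lemma apply_zero_nonneg_of_mem_Gamma {g : Fin 16 → ℝ} (hg : g ∈ Gamma) : 0 ≤ g 0 := by
  rcases hg with ⟨i, rfl⟩ | ⟨a, b, hab, rfl⟩ | ⟨k, l, m, ⟨hkl, hkm, hlm⟩, rfl⟩ |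
    ⟨j, a, b, c, d, ⟨-, -, -, -, -, hac, had, hbc, hbd, -⟩, rfl⟩
  · simp [eP_apply_zero]
  · simp [eE_apply_zero hab]
  · simp [eL, eP_apply_zero, eE_apply_zero, hkl, hkm, hlm]
  · simp [eL, eP_apply_zero, eE_apply_zero, hac, had, hbc, hbd, Finset.sum_apply]

lemma eL_mem_GammaDual : eL ∈ GammaDual := fun g hg => by
  rw [eL, ip_single_right]
  exact apply_zero_nonneg_of_mem_Gamma hg

lemma exists_eP_or_eE_index : ∀ j : Fin 16, j ≠ 0 →
    (∃ i : Fin 5, j.val = i.val + 1) ∨ ∃ a b : Fin 5, a.val < b.val ∧ j = pairIdx a.val b.val := by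
  decide

lemma single_mem_Gamma {j : Fin 16} (hj : j ≠ 0) : Pi.single j 1 ∈ Gamma := by
  rcases exists_eP_or_eE_index j hj with ⟨i, hi⟩ | ⟨a, b, hab, rfl⟩
  · exact Or.inl ⟨i, congrArg (Pi.single · 1) (Fin.ext hi)⟩
  · exact Or.inr (Or.inl ⟨a, b, Fin.ne_of_val_ne hab.ne, (eE_eq_single hab).symm⟩)

lemma nonneg_of_mem_GammaDual {v : Fin 16 → ℝ} (hv : v ∈ GammaDual) (j : Fin 16) : 0 ≤ v j := by
  have hpos : ∀ j ≠ 0, 0 ≤ v j := fun j hj => ip_single_left j v ▸ hv _ (single_mem_Gamma hj)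
  rcases eq_or_ne j 0 with rfl | hj
  · have hplane := hv _ (Or.inr (Or.inr (Or.inl ⟨0, 1, 2, ⟨by decide, by decide, by decide⟩, rfl⟩)))
    have hexpand : ip (eL - eP 0 - eP 1 - eP 2 - eE 0 1 - eE 0 2 - eE 1 2) v =
        v 0 - v 1 - v 2 - v 3 - v 6 - v 7 - v 10 := by
      simp [ip_eq_dotProduct, sub_dotProduct, eL, eP, eE, pairIdx]
    linarith [hpos 1 (by decide), hpos 2 (by decide), hpos 3 (by decide), hpos 6 (by decide),
      hpos 7 (by decide), hpos 10 (by decide)]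
  · exact hpos j hj

lemma spansExtremalRay_single {C : Set (Fin 16 → ℝ)} {j : Fin 16} (hmem : Pi.single j 1 ∈ C)
    (hC : ∀ v ∈ C, ∀ i, 0 ≤ v i) : SpansExtremalRay C (Pi.single j 1) := by
  refine ⟨by simp, hmem, fun v₁ v₂ h₁ h₂ ⟨t, _, hsum⟩ => ?_⟩
  have hray : ∀ v ∈ C, ∀ w ∈ C, v + w = t • Pi.single j 1 →
      ∃ s : ℝ, 0 ≤ s ∧ v = s • Pi.single j 1 := by
    intro v hv w hw hvw
    refine ⟨v j, hC v hv j, funext fun i => ?_⟩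
    rcases eq_or_ne i j with rfl | hij
    · simp
    · have := congrFun hvw i
      simp only [Pi.add_apply, Pi.smul_apply, Pi.single_eq_of_ne hij, smul_zero] at this ⊢
      linarith [hC v hv i, hC w hw i]
  exact ⟨hray v₁ h₁ v₂ h₂ hsum, hray v₂ h₂ v₁ h₁ (add_comm v₁ v₂ ▸ hsum)⟩

lemma Kcl_apply_zero : Kcl 0 = -4 := by
  have hE : ∀ a b : Fin 5, (if a < b then eE a b else 0) 0 = 0 := fun a b => by
    split_ifs with hab
    · exact eE_apply_zero hab.ne
    · rfl
  simp [Kcl, eL, eP_apply_zero, Finset.sum_apply, hE]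

theorem rho10_coextremal :
    ρ₁₀ ∈ GammaDual ∧ SpansExtremalRay GammaDual ρ₁₀ ∧ ip Kcl ρ₁₀ = -4 :=
  ⟨eL_mem_GammaDual,
    spansExtremalRay_single eL_mem_GammaDual fun _ => nonneg_of_mem_GammaDual,
    (ip_single_right Kcl 0).trans Kcl_apply_zero⟩
end
end
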